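/- arXiv:2511.00645 — 2 statements merged into one kernel-verified Lean document; each statement's English description precedes it below -/
import Mathlib

section
/- Let p ∈ (0,1], σ > 0, and let p_Z(z) = (c_p/σ) exp(−|z|^p/(2σ^p)) be the generalized Gaussian density. Then for any n and any vectors b, b̃, y ∈ ℝⁿ, the ratio of product densities satisfies ∏ᵢ p_Z(yᵢ − bᵢ) / ∏ᵢ p_Z(yᵢ − b̃ᵢ) ≥ exp(−(‖b‖_p^p + ‖b̃‖_p^p)/(2σ^p)). -/
lemma rpow_sub_add_aux (p : ℝ) (hp0 : 0 ≤ p) (hp1 : p ≤ 1) (x y : ℝ) (hx : 0 ≤ x)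
    (hy : 0 ≤ y) : (x + y) ^ p ≤ x ^ p + y ^ p := by
  have h := NNReal.rpow_add_le_add_rpow x.toNNReal y.toNNReal hp0 hp1
  have h2 := NNReal.coe_le_coe.mpr h
  push_cast [Real.coe_toNNReal _ hx, Real.coe_toNNReal _ hy] at h2
  exact h2

lemma abs_rpow_key (p : ℝ) (hp0 : 0 ≤ p) (hp1 : p ≤ 1) (u v w : ℝ) :
    |u - v| ^ p ≤ |u - w| ^ p + |v| ^ p + |w| ^ p := by
  have h1 : |u - v| ≤ |u - w| + |w| + |v| := by
    calc |u - v| = |(u - w) + w + (-v)| := by ring_nf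
    _ ≤ |u - w| + |w| + |v| := by
        refine (abs_add_le _ _).trans ?_
        rw [abs_neg]
        gcongr
        exact abs_add_le _ _
  calc |u - v| ^ p ≤ (|u - w| + |w| + |v|) ^ p :=
        Real.rpow_le_rpow (abs_nonneg _) h1 hp0
    _ ≤ (|u - w| + |w|) ^ p + |v| ^ p :=
        rpow_sub_add_aux p hp0 hp1 _ _ (by positivity) (abs_nonneg _)
    _ ≤ |u - w| ^ p + |w| ^ p + |v| ^ p := by
        gcongr
        exact rpow_sub_add_aux p hp0 hp1 _ _ (abs_nonneg _) (abs_nonneg _)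
    _ = |u - w| ^ p + |v| ^ p + |w| ^ p := by ring

open Real in
theorem genGaussian_density_ratio_lower_bound (p σ : ℝ) (hp0 : 0 < p) (hp1 : p ≤ 1)
    (hσ : 0 < σ) (n : ℕ) (b bt y : Fin n → ℝ) :
    let cp : ℝ := p / (2 ^ ((p + 1) / p) * Real.Gamma (1 / p))
    let pZ : ℝ → ℝ := fun z => (cp / σ) * Real.exp (-(|z| ^ p) / (2 * σ ^ p))
    (∏ i, pZ (y i - b i)) / (∏ i, pZ (y i - bt i)) ≥
      Real.exp (-((∑ i, |b i| ^ p) + ∑ i, |bt i| ^ p) / (2 * σ ^ p)) := by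
  intro cp pZ
  have hΓ : 0 < Real.Gamma (1 / p) := Real.Gamma_pos_of_pos (by positivity)
  have hcp : 0 < cp := by
    have h2 : (0:ℝ) < 2 ^ ((p + 1) / p) := Real.rpow_pos_of_pos two_pos _
    exact div_pos hp0 (mul_pos h2 hΓ)
  have hC : 0 < cp / σ := div_pos hcp hσ
  have hσp : 0 < 2 * σ ^ p := by
    have := Real.rpow_pos_of_pos hσ p
    positivity
  have hratio : ∀ i : Fin n, pZ (y i - b i) / pZ (y i - bt i)
      = Real.exp ((-(|y i - b i| ^ p) + |y i - bt i| ^ p) / (2 * σ ^ p)) := by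
    intro i
    show ((cp / σ) * Real.exp _) / ((cp / σ) * Real.exp _) = _
    rw [mul_div_mul_left _ _ (ne_of_gt hC), ← Real.exp_sub]
    congr 1
    ring
  rw [ge_iff_le, ← Finset.prod_div_distrib]
  calc Real.exp (-((∑ i, |b i| ^ p) + ∑ i, |bt i| ^ p) / (2 * σ ^ p))
      ≤ Real.exp (∑ i, (-(|y i - b i| ^ p) + |y i - bt i| ^ p) / (2 * σ ^ p)) := by
        rw [Real.exp_le_exp]
        rw [← Finset.sum_div, div_le_div_iff_of_pos_right hσp]
        have heq : -((∑ i, |b i| ^ p) + ∑ i, |bt i| ^ p)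
            = ∑ i, (-(|b i| ^ p) + -(|bt i| ^ p)) := by
          rw [Finset.sum_add_distrib, Finset.sum_neg_distrib, Finset.sum_neg_distrib]; ring
        rw [heq]
        apply Finset.sum_le_sum
        intro i _
        have := abs_rpow_key p hp0.le hp1 (y i) (b i) (bt i)
        linarith
    _ = ∏ i, pZ (y i - b i) / pZ (y i - bt i) := by
        rw [Real.exp_sum]
        exact Finset.prod_congr rfl (fun i _ => (hratio i).symm)
end

section
/- Let (Ω, P) be a probability space and for each n let g̃ₙ : Vⁿ × Yⁿ × Ω → {0,1} be a randomized test. Define the deterministic test gₙ(v,y) = 1 iff P[g̃ₙ(v,y,S)=0] ≤ γₙ, for a sequence γₙ > 0 with γₙ → 0 and (1/n) ln γₙ → 0. Then the deterministic test's type-I error αₙ satisfies 1 − α̃ₙ ≤ 1 − αₙ + γₙ and its type-II error βₙ satisfies β̃ₙ ≥ γₙ βₙ, where α̃ₙ, β̃ₙ are the errors of the randomized test. -/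
open MeasureTheory

theorem derandomized_test_error_bounds {V Y Ω : Type*} [Fintype V] [Fintype Y]
    [MeasurableSpace Ω] (μ : Measure Ω) [IsProbabilityMeasure μ]
    (p₀ p₁ : V × Y → ℝ)
    (hp₀nn : ∀ z, 0 ≤ p₀ z) (hp₀1 : ∑ z, p₀ z = 1)
    (hp₁nn : ∀ z, 0 ≤ p₁ z) (hp₁1 : ∑ z, p₁ z = 1)
    (gt : V × Y → Ω → Bool)
    (hmeas : ∀ z, MeasurableSet {ω | gt z ω = true})
    (γ : ℝ) (hγ : 0 < γ)
    (g : V × Y → Bool)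
    (hg : ∀ z, g z = true ↔ (μ {ω | gt z ω = false}).toReal ≤ γ) :
    (1 - ∑ z, p₀ z * (μ {ω | gt z ω = true}).toReal ≤
        (1 - ∑ z, p₀ z * (if g z = true then (1 : ℝ) else 0)) + γ) ∧
      γ * (∑ z, p₁ z * (if g z = false then (1 : ℝ) else 0)) ≤
        ∑ z, p₁ z * (μ {ω | gt z ω = false}).toReal := by
  have hbnn : ∀ z, 0 ≤ (μ {ω | gt z ω = false}).toReal := fun z => ENNReal.toReal_nonneg
  have hab : ∀ z, (μ {ω | gt z ω = true}).toReal + (μ {ω | gt z ω = false}).toReal = 1 := by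
    intro z
    have hc : {ω | gt z ω = false} = {ω | gt z ω = true}ᶜ := by
      ext ω; simp
    rw [hc, measure_compl (hmeas z) (measure_ne_top μ _)]
    have hle : μ {ω | gt z ω = true} ≤ 1 := prob_le_one
    rw [measure_univ, ENNReal.toReal_sub_of_le hle ENNReal.one_ne_top]
    simp
  constructor
  · have h1 : ∀ z ∈ Finset.univ (α := V × Y),
        p₀ z * (if g z = true then (1 : ℝ) else 0) ≤
          p₀ z * ((μ {ω | gt z ω = true}).toReal + γ) := by
      intro z _
      apply mul_le_mul_of_nonneg_left _ (hp₀nn z)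
      by_cases hgz : g z = true
      · have h := (hg z).mp hgz
        have := hab z
        simp only [hgz, if_true]
        linarith
      · have : 0 ≤ (μ {ω | gt z ω = true}).toReal := ENNReal.toReal_nonneg
        rw [if_neg hgz]
        linarith
    have hs := Finset.sum_le_sum h1
    have hsum : ∑ z, p₀ z * ((μ {ω | gt z ω = true}).toReal + γ) =
        (∑ z, p₀ z * (μ {ω | gt z ω = true}).toReal) + γ := by
      simp [mul_add, Finset.sum_add_distrib, ← Finset.sum_mul, hp₀1]
    rw [hsum] at hs
    linarith
  · have h2 : ∀ z ∈ Finset.univ (α := V × Y),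
        p₁ z * (γ * (if g z = false then (1 : ℝ) else 0)) ≤
          p₁ z * (μ {ω | gt z ω = false}).toReal := by
      intro z _
      apply mul_le_mul_of_nonneg_left _ (hp₁nn z)
      by_cases hgz : g z = false
      · have h : ¬ (μ {ω | gt z ω = false}).toReal ≤ γ := by
          intro h; have := (hg z).mpr h; simp [hgz] at this
        simp only [hgz, if_true]
        linarith
      · rw [if_neg hgz, mul_zero]
        exact hbnn z
    have hs := Finset.sum_le_sum h2
    calc γ * (∑ z, p₁ z * (if g z = false then (1 : ℝ) else 0))
        = ∑ z, p₁ z * (γ * (if g z = false then (1 : ℝ) else 0)) := by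
          rw [Finset.mul_sum]; congr 1; ext z; ring
      _ ≤ _ := hs
end
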